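/- Let m ≥ 1 be odd and let r ≥ 3 be odd. Then M(mK_r) = mr²(mr+1)²/8 − mr(mr+1)(2mr+1)/12 (an equality of rational numbers). -/

import Mathlib

/-!
For a labeling `f` of `mK_r` with copy sums `S i = ∑ x, f (i, x)`, expanding the squares gives
`2 M(f) = ∑ i, S i ^ 2 - ∑_{n ≤ mr} n ^ 2`, while `∑ i, S i = mr(mr+1)/2` does not depend on `f`.
Cauchy–Schwarz, `(∑ i, S i) ^ 2 ≤ m ∑ i, S i ^ 2`, gives the lower bound, with equality when all
copies have the same sum `r(mr+1)/2`. For `m = 2k+1` and odd `r ≥ 3` such a labeling exists: give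
vertex `(i, x)` the label `m x + σ_x(i) + 1` with permutations `σ_x` of `{0, …, 2k}` whose sum
over the columns does not depend on `i`. The first three columns use permutations with
`σ_0 + σ_1 + σ_2 = 3k` (a `3 × m` magic-rectangle pattern), and the remaining columns come in pairs
`σ(i) = i`, `σ(i) = 2k - i`.
-/

open Finset

/-- The product-sum M(f) of a vertex labeling: the sum of `f u * f v` over all edges
`{u,v}` of `G`, each edge counted exactly once. -/
noncomputable def prodSum {V : Type*} [Fintype V] (G : SimpleGraph V) (f : V → ℕ) : ℕ := by
  classical
  exact ∑ e ∈ G.edgeFinset, Sym2.lift ⟨fun u v => f u * f v, fun u v => Nat.mul_comm _ _⟩ e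

/-- A labeling of a graph on `V`: a bijection from the vertices onto `{1,…,|V|}`. -/
def IsLabeling (V : Type*) [Fintype V] (f : V → ℕ) : Prop :=
  Set.BijOn f Set.univ (Set.Icc 1 (Fintype.card V))

/-- MinPS of `G`: the minimum of `M(f)` over all labelings `f`. -/
noncomputable def minPS {V : Type*} [Fintype V] (G : SimpleGraph V) : ℕ :=
  sInf { m | ∃ f : V → ℕ, IsLabeling V f ∧ prodSum G f = m }

/-- `mK_r`: the vertex-disjoint union of `m` copies of the complete graph `K_r`.
Vertex `(i, x)` lies in the `i`-th copy; two vertices are adjacent iff they are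
distinct and lie in the same copy. -/
def mKGraph (m r : ℕ) : SimpleGraph (Fin m × Fin r) where
  Adj a b := a.1 = b.1 ∧ a.2 ≠ b.2
  symm := ⟨fun a b h => ⟨h.1.symm, h.2.symm⟩⟩
  loopless := ⟨fun a h => h.2 rfl⟩

section ProdSum

variable {V : Type*} [Fintype V]

lemma two_mul_prodSum (G : SimpleGraph V) [DecidableRel G.Adj] (f : V → ℕ) :
    2 * prodSum G f = ∑ u, ∑ v, if G.Adj u v then f u * f v else 0 := by
  classical
  let g : Sym2 V → ℕ := Sym2.lift ⟨fun u v => f u * f v, fun _ _ => Nat.mul_comm _ _⟩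
  have hprodSum : prodSum G f = ∑ e ∈ G.edgeFinset, g e := by
    unfold prodSum
    congr!
  have hdarts : 2 * ∑ e ∈ G.edgeFinset, g e = ∑ d : G.Dart, g d.edge := by
    rw [← Finset.sum_fiberwise_of_maps_to (g := SimpleGraph.Dart.edge) (t := G.edgeFinset)
      (fun d _ => G.mem_edgeFinset.mpr d.edge_mem), Finset.mul_sum]
    refine Finset.sum_congr rfl fun e he => ?_
    rw [Finset.sum_congr rfl fun d hd => congrArg g (Finset.mem_filter.mp hd).2,
      Finset.sum_const, smul_eq_mul, G.dart_edge_fiber_card e (G.mem_edgeFinset.mp he)]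
  rw [hprodSum, hdarts, ← Finset.sum_product', ← Finset.sum_filter]
  exact Finset.sum_bij' (fun d _ => d.toProd) (fun p hp => ⟨p, (Finset.mem_filter.mp hp).2⟩)
    (by simp) (by simp) (by simp) (by simp) (fun _ _ => rfl)

lemma IsLabeling.sum_comp {f : V → ℕ} (hf : IsLabeling V f) {M : Type*} [AddCommMonoid M]
    (g : ℕ → M) : ∑ v, g (f v) = ∑ n ∈ Finset.Icc 1 (Fintype.card V), g n := by
  classical
  have himage : Finset.univ.image f = Finset.Icc 1 (Fintype.card V) := by
    apply Finset.coe_injective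
    rw [Finset.coe_image, Finset.coe_univ, Finset.coe_Icc]
    exact hf.image_eq
  rw [← himage, Finset.sum_image fun x _ y _ hxy => hf.injOn (Set.mem_univ x) (Set.mem_univ y) hxy]

lemma isLabeling_of_injective {f : V → ℕ} (hinj : Function.Injective f)
    (hmaps : ∀ v, f v ∈ Set.Icc 1 (Fintype.card V)) : IsLabeling V f := by
  classical
  refine ⟨fun v _ => hmaps v, hinj.injOn, ?_⟩
  have himage : Finset.univ.image f = Finset.Icc 1 (Fintype.card V) :=
    Finset.eq_of_subset_of_card_le (fun n hn => by
      obtain ⟨v, -, rfl⟩ := Finset.mem_image.mp hn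
      exact Finset.mem_Icc.mpr (hmaps v))
      (by rw [Finset.card_image_of_injective _ hinj, Nat.card_Icc, Finset.card_univ]; omega)
  intro n hn
  obtain ⟨v, -, rfl⟩ := Finset.mem_image.mp (himage ▸ Finset.mem_Icc.mpr hn)
  exact ⟨v, Set.mem_univ v, rfl⟩

lemma minPS_eq_of_forall_le (G : SimpleGraph V) {f₀ : V → ℕ} (hf₀ : IsLabeling V f₀)
    (hle : ∀ f, IsLabeling V f → prodSum G f₀ ≤ prodSum G f) : minPS G = prodSum G f₀ := by
  obtain ⟨f, hf, hmin⟩ := Nat.sInf_mem (⟨_, f₀, hf₀, rfl⟩ :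
    {n | ∃ f, IsLabeling V f ∧ prodSum G f = n}.Nonempty)
  exact le_antisymm (Nat.sInf_le ⟨f₀, hf₀, rfl⟩) ((hle f hf).trans_eq hmin)

end ProdSum

instance (m r : ℕ) : DecidableRel (mKGraph m r).Adj := fun _ _ => instDecidableAnd

lemma two_mul_prodSum_mKGraph_add_sum_sq (m r : ℕ) (f : Fin m × Fin r → ℕ) :
    2 * prodSum (mKGraph m r) f + ∑ v, f v ^ 2 = ∑ i, (∑ x, f (i, x)) ^ 2 := by
  have hsplit : ∀ u v : Fin m × Fin r, (if u.1 = v.1 then f u * f v else 0) =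
      (if (mKGraph m r).Adj u v then f u * f v else 0) + if u = v then f u * f v else 0 := by
    rintro ⟨i, x⟩ ⟨j, y⟩
    by_cases hij : i = j <;> by_cases hxy : x = y <;> simp [mKGraph, hij, hxy]
  calc 2 * prodSum (mKGraph m r) f + ∑ v, f v ^ 2
      = ∑ u, ∑ v, ((if (mKGraph m r).Adj u v then f u * f v else 0) +
          if u = v then f u * f v else 0) := by
        simp [two_mul_prodSum, Finset.sum_add_distrib, sq]
    _ = ∑ u : Fin m × Fin r, ∑ v : Fin m × Fin r, if u.1 = v.1 then f u * f v else 0 := by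
        simp only [hsplit]
    _ = ∑ i, (∑ x, f (i, x)) ^ 2 := by
        simp only [Fintype.sum_prod_type, sq, Finset.sum_mul_sum]
        refine Finset.sum_congr rfl fun i _ => Finset.sum_congr rfl fun x _ => ?_
        rw [Finset.sum_eq_single i (fun j _ hj => by simp [Ne.symm hj]) (by simp)]
        simp

lemma sum_Icc_one_cast (N : ℕ) : ∑ n ∈ Finset.Icc 1 N, (n : ℚ) = N * (N + 1) / 2 := by
  induction N with
  | zero => simp
  | succ N ih =>
    rw [Finset.sum_Icc_succ_top (by omega), ih]
    push_cast
    ring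

lemma sum_Icc_one_sq_cast (N : ℕ) :
    ∑ n ∈ Finset.Icc 1 N, (n : ℚ) ^ 2 = N * (N + 1) * (2 * N + 1) / 6 := by
  induction N with
  | zero => simp
  | succ N ih =>
    rw [Finset.sum_Icc_succ_top (by omega), ih]
    push_cast
    ring

section Labeling

variable {m r : ℕ} {f : Fin m × Fin r → ℕ}

lemma IsLabeling.prodSum_mKGraph (hf : IsLabeling (Fin m × Fin r) f) :
    (prodSum (mKGraph m r) f : ℚ) = (∑ i, (∑ x, (f (i, x) : ℚ)) ^ 2) / 2 -
      m * r * (m * r + 1) * (2 * m * r + 1) / 12 := by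
  have hsq : ∑ v, (f v : ℚ) ^ 2 = m * r * (m * r + 1) * (2 * m * r + 1) / 6 := by
    rw [hf.sum_comp (fun n => (n : ℚ) ^ 2), sum_Icc_one_sq_cast]
    simp [mul_assoc]
  have h := two_mul_prodSum_mKGraph_add_sum_sq m r f
  have hq : 2 * (prodSum (mKGraph m r) f : ℚ) + ∑ v, (f v : ℚ) ^ 2 =
      ∑ i, (∑ x, (f (i, x) : ℚ)) ^ 2 := by exact_mod_cast h
  linear_combination hq / 2 - hsq / 2

lemma IsLabeling.sum_mKGraph (hf : IsLabeling (Fin m × Fin r) f) :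
    ∑ i, ∑ x, (f (i, x) : ℚ) = m * r * (m * r + 1) / 2 := by
  rw [← Fintype.sum_prod_type' (f := fun i x => (f (i, x) : ℚ)), hf.sum_comp (fun n => (n : ℚ)),
    sum_Icc_one_cast]
  simp

lemma IsLabeling.le_prodSum_mKGraph (hm : 0 < m) (hf : IsLabeling (Fin m × Fin r) f) :
    (m : ℚ) * r ^ 2 * (m * r + 1) ^ 2 / 8 - m * r * (m * r + 1) * (2 * m * r + 1) / 12 ≤
      prodSum (mKGraph m r) f := by
  have hcs := sq_sum_le_card_mul_sum_sq (s := Finset.univ) (f := fun i => ∑ x, (f (i, x) : ℚ))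
  rw [hf.sum_mKGraph, Finset.card_univ, Fintype.card_fin] at hcs
  rw [hf.prodSum_mKGraph]
  have hm' : (0 : ℚ) < m := by exact_mod_cast hm
  rw [← mul_le_mul_iff_right₀ hm']
  nlinarith [hcs]

lemma IsLabeling.prodSum_mKGraph_of_rowSum (hf : IsLabeling (Fin m × Fin r) f)
    (hrow : ∀ i, 2 * ∑ x, f (i, x) = r * (m * r + 1)) :
    (prodSum (mKGraph m r) f : ℚ) =
      (m : ℚ) * r ^ 2 * (m * r + 1) ^ 2 / 8 - m * r * (m * r + 1) * (2 * m * r + 1) / 12 := by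
  have hrowq : ∀ i, ∑ x, (f (i, x) : ℚ) = r * (m * r + 1) / 2 := fun i => by
    have hq : 2 * ∑ x, (f (i, x) : ℚ) = r * (m * r + 1) := by exact_mod_cast hrow i
    linarith
  simp only [hf.prodSum_mKGraph, hrowq, Finset.sum_const, Finset.card_univ, Fintype.card_fin,
    nsmul_eq_mul]
  ring

end Labeling

def columnPerm (k x i : ℕ) : ℕ :=
  if x = 0 then i
  else if x = 1 then (if i ≤ k then 2 * (k - i) else 4 * k + 1 - 2 * i)
  else if x = 2 then (if i ≤ k then i + k else i - k - 1)
  else if x % 2 = 1 then i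
  else 2 * k - i

lemma columnPerm_lt {k i : ℕ} (x : ℕ) (hi : i < 2 * k + 1) : columnPerm k x i < 2 * k + 1 := by
  unfold columnPerm
  split_ifs <;> omega

lemma columnPerm_inj {k i i' : ℕ} (x : ℕ) (hi : i < 2 * k + 1) (hi' : i' < 2 * k + 1)
    (h : columnPerm k x i = columnPerm k x i') : i = i' := by
  unfold columnPerm at h
  split_ifs at h <;> omega

lemma sum_columnPerm (k h : ℕ) {i : ℕ} (hi : i < 2 * k + 1) :
    ∑ x ∈ Finset.range (2 * h + 3), columnPerm k x i = k * (2 * h + 3) := by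
  induction h with
  | zero =>
    simp only [Finset.sum_range_succ, Finset.sum_range_zero, columnPerm]
    split_ifs <;> simp_all <;> omega
  | succ h ih =>
    have hodd : columnPerm k (2 * h + 3) i = i := by simp [columnPerm]
    have heven : columnPerm k (2 * h + 4) i = 2 * k - i := by simp [columnPerm]
    have hpair : i + (2 * k - i) = 2 * k := by omega
    rw [show 2 * (h + 1) + 3 = 2 * h + 3 + 1 + 1 by ring, Finset.sum_range_succ,
      Finset.sum_range_succ, ih, hodd, heven, add_assoc, hpair]
    ring

def balancedLabeling (k r : ℕ) (v : Fin (2 * k + 1) × Fin r) : ℕ :=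
  (2 * k + 1) * v.2 + columnPerm k v.2 v.1 + 1

lemma isLabeling_balancedLabeling (k r : ℕ) :
    IsLabeling (Fin (2 * k + 1) × Fin r) (balancedLabeling k r) := by
  refine isLabeling_of_injective ?_ fun ⟨i, x⟩ => ?_
  · have hdigits : ∀ (i : Fin (2 * k + 1)) (x : Fin r),
        ((2 * k + 1) * x + columnPerm k x i) / (2 * k + 1) = x ∧
          ((2 * k + 1) * x + columnPerm k x i) % (2 * k + 1) = columnPerm k x i :=
      fun i x => (Nat.div_mod_unique (Nat.succ_pos _)).mpr ⟨add_comm _ _, columnPerm_lt x i.isLt⟩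
    rintro ⟨i, x⟩ ⟨i', x'⟩ h
    have h' := Nat.add_right_cancel h
    have hx : x = x' := Fin.ext <| by rw [← (hdigits i x).1, h', (hdigits i' x').1]
    subst hx
    have hperm : columnPerm k x i = columnPerm k x i' := by
      rw [← (hdigits i x).2, h', (hdigits i' x).2]
    exact Prod.ext (Fin.ext (columnPerm_inj x i.isLt i'.isLt hperm)) rfl
  · have hlt := columnPerm_lt x i.isLt
    have hcol : (2 * k + 1) * (x + 1) ≤ (2 * k + 1) * r := Nat.mul_le_mul_left _ x.isLt
    simp only [balancedLabeling, Fintype.card_prod, Fintype.card_fin, Set.mem_Icc]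
    constructor <;> nlinarith

lemma two_mul_sum_balancedLabeling (k h : ℕ) (i : Fin (2 * k + 1)) :
    2 * ∑ x, balancedLabeling k (2 * h + 3) (i, x) =
      (2 * h + 3) * ((2 * k + 1) * (2 * h + 3) + 1) := by
  have hperm := sum_columnPerm k h i.isLt
  have hid := Finset.sum_range_id_mul_two (2 * h + 3)
  rw [← Fin.sum_univ_eq_sum_range] at hperm hid
  simp only [balancedLabeling, Finset.sum_add_distrib, ← Finset.mul_sum, hperm, Finset.sum_const,
    Finset.card_univ, Fintype.card_fin, smul_eq_mul]
  rw [show 2 * h + 3 - 1 = 2 * h + 2 by omega] at hid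
  linear_combination (2 * k + 1) * hid

theorem statement5_general (m r : ℕ) (hmodd : Odd m) (hr : 3 ≤ r) (hrodd : Odd r) :
    (minPS (mKGraph m r) : ℚ) =
      (m : ℚ) * r ^ 2 * (m * r + 1) ^ 2 / 8 - m * r * (m * r + 1) * (2 * m * r + 1) / 12 := by
  obtain ⟨k, rfl⟩ := hmodd
  obtain ⟨h, rfl⟩ : ∃ h, r = 2 * h + 3 := by
    obtain ⟨t, rfl⟩ := hrodd
    exact ⟨t - 1, by omega⟩
  have hF := isLabeling_balancedLabeling k (2 * h + 3)
  have hvalue := hF.prodSum_mKGraph_of_rowSum (two_mul_sum_balancedLabeling k h)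
  have hmin : ∀ f, IsLabeling _ f →
      prodSum (mKGraph _ _) (balancedLabeling k (2 * h + 3)) ≤ prodSum (mKGraph _ _) f :=
    fun f hf => by exact_mod_cast hvalue.trans_le (hf.le_prodSum_mKGraph (Nat.succ_pos _))
  rw [minPS_eq_of_forall_le _ hF hmin, hvalue]

/-- For odd `m ≥ 1` and odd `r ≥ 3`,
`M(mK_r) = mr²(mr+1)²/8 − mr(mr+1)(2mr+1)/12`. -/
theorem statement5 (m r : ℕ) (hm : 1 ≤ m) (hmodd : Odd m) (hr : 3 ≤ r) (hrodd : Odd r) :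
    (minPS (mKGraph m r) : ℚ) =
      (m : ℚ) * r ^ 2 * (m * r + 1) ^ 2 / 8 - m * r * (m * r + 1) * (2 * m * r + 1) / 12 :=
  statement5_general m r hmodd hr hrodd
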